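/- arXiv:2106.13372 — 4 statements merged into one kernel-verified Lean document; each statement's English description precedes it below -/
import Mathlib

section
/- If G is a hamiltonian-connected simple graph with n > 3 vertices, then G has at least 3n/2 edges, i.e., 2·|E(G)| ≥ 3n. -/
/-- A simple graph is hamiltonian-connected if every pair of distinct vertices is joined
by a hamiltonian path. -/
def HamiltonianConnected {V : Type*} [DecidableEq V] (G : SimpleGraph V) : Prop :=
  ∀ u v : V, u ≠ v → ∃ p : G.Walk u v, p.IsHamiltonian

private lemma internal_two_nbrs {V : Type*} {G : SimpleGraph V} {x y : V} (p : G.Walk x y)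
    (hp : p.IsPath) {u : V} (hu : u ∈ p.support) (hux : u ≠ x) (huy : u ≠ y) :
    ∃ c d, c ≠ d ∧ G.Adj u c ∧ G.Adj u d ∧ c ∈ p.support ∧ d ∈ p.support := by
  induction p with
  | nil => simp at hu; exact absurd hu hux
  | @cons a s b h q ih =>
    simp only [SimpleGraph.Walk.support_cons, List.mem_cons] at hu
    rcases hu with rfl | hu
    · exact absurd rfl hux
    rcases eq_or_ne u s with rfl | hus
    · -- u is the second vertex
      cases q with
      | nil => exact absurd rfl huy
      | @cons s t b h2 r =>
        refine ⟨a, t, ?_, h.symm, h2, by simp, by simp⟩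
        rintro rfl
        have := hp.support_nodup
        simp at this
    · obtain ⟨c, d, hcd, hc, hd, hcm, hdm⟩ := ih hp.of_cons hu hus huy
      exact ⟨c, d, hcd, hc, hd, by simp [hcm], by simp [hdm]⟩

private lemma path_support_eq {V : Type*} {G : SimpleGraph V} {a b v : V} (p : G.Walk a b)
    (hp : p.IsPath) (hv : v ∈ p.support) (hva : v ≠ a) (hvb : v ≠ b)
    (hnbr : ∀ w, G.Adj v w → w = a ∨ w = b) : p.support = [a, v, b] := by
  cases p with
  | nil => simp at hv; exact absurd hv hva
  | @cons a s b h q =>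
    simp only [SimpleGraph.Walk.support_cons, List.mem_cons] at hv
    rcases hv with rfl | hv
    · exact absurd rfl hva
    have hnd := hp.support_nodup
    simp only [SimpleGraph.Walk.support_cons, List.nodup_cons] at hnd
    rcases eq_or_ne v s with rfl | hvs
    · cases q with
      | nil => exact absurd rfl hvb
      | @cons s t b h2 r =>
        have ht : t = a ∨ t = b := hnbr t h2
        rcases ht with rfl | rfl
        · exfalso; exact hnd.1 (by simp)
        · cases r with
          | nil => simp
          | @cons t u b h3 r' =>
            exfalso
            have := hnd.2
            simp only [SimpleGraph.Walk.support_cons, List.nodup_cons] at this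
            exact this.2.1 (by simp)
    · -- v is internal within q; its two distinct neighbors lie in q.support,
      -- but they must be a and b, and a ∉ q.support.
      exfalso
      obtain ⟨c, d, hcd, hc, hd, hcm, hdm⟩ :=
        internal_two_nbrs q hp.of_cons hv hvs hvb
      have ha : a ∈ q.support := by
        rcases hnbr c hc with rfl | rfl
        · exact hcm
        · rcases hnbr d hd with rfl | rfl
          · exact hdm
          · exact absurd rfl hcd
      exact hnd.1 ha

theorem stmt_2 {V : Type*} [Fintype V] [DecidableEq V] (G : SimpleGraph V)
    [DecidableRel G.Adj] (hcard : 3 < Fintype.card V) (hHC : HamiltonianConnected G) :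
    3 * Fintype.card V ≤ 2 * G.edgeFinset.card := by
  have hdeg : ∀ v : V, 3 ≤ G.degree v := by
    intro v
    -- find x ≠ y both different from v
    have h2 : 1 < (Finset.univ.erase v).card := by
      rw [Finset.card_erase_of_mem (Finset.mem_univ v), Finset.card_univ]
      omega
    obtain ⟨x, hx, y, hy, hxy⟩ := Finset.one_lt_card.mp h2
    have hxv : x ≠ v := Finset.ne_of_mem_erase hx
    have hyv : y ≠ v := Finset.ne_of_mem_erase hy
    obtain ⟨p, hpham⟩ := hHC x y hxy
    obtain ⟨a, b, hab, hA, hB, -, -⟩ :=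
      internal_two_nbrs p hpham.isPath (hpham.mem_support v) hxv.symm hyv.symm
    -- a, b are distinct neighbors of v
    by_contra hlt
    push_neg at hlt
    have hsub : ({a, b} : Finset V) ⊆ G.neighborFinset v := by
      intro w hw
      simp only [Finset.mem_insert, Finset.mem_singleton] at hw
      rcases hw with rfl | rfl <;> simp [SimpleGraph.mem_neighborFinset, hA, hB]
    have hcard2 : ({a, b} : Finset V).card = 2 := Finset.card_pair hab
    have heq : G.neighborFinset v = {a, b} := by
      apply Finset.eq_of_superset_of_card_ge hsub
      rw [hcard2]
      have := G.card_neighborFinset_eq_degree v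
      omega
    have hnbr : ∀ w, G.Adj v w → w = a ∨ w = b := by
      intro w hw
      have : w ∈ G.neighborFinset v := by simpa [SimpleGraph.mem_neighborFinset] using hw
      rw [heq] at this
      simpa using this
    obtain ⟨q, hqham⟩ := hHC a b hab
    have hsupp := path_support_eq q hqham.isPath (hqham.mem_support v)
      (G.ne_of_adj hA) (G.ne_of_adj hB) hnbr
    have : Fintype.card V = 3 := by
      have h1 : q.support.toFinset = Finset.univ := hqham.support_toFinset
      have h2 : q.support.Nodup := hqham.isPath.support_nodup
      have : q.support.toFinset.card = q.support.length := List.toFinset_card_of_nodup h2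
      rw [h1, Finset.card_univ, hsupp] at this
      simpa using this
    omega
  calc 3 * Fintype.card V = ∑ _v : V, 3 := by simp [mul_comm]
    _ ≤ ∑ v, G.degree v := Finset.sum_le_sum fun v _ => hdeg v
    _ = 2 * G.edgeFinset.card := G.sum_degrees_eq_twice_card_edges
end

section
/- Let G be a non-hamiltonian simple graph on n > 3 vertices that contains at least one hamiltonian path. Then the number of unordered pairs of distinct vertices joined by a hamiltonian path is at most (n-1)(n-2)/2. -/
open SimpleGraph Walk

def hamPairs {V : Type*} [DecidableEq V] (G : SimpleGraph V) : Set (Sym2 V) :=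
  {e | ∃ u v : V, u ≠ v ∧ e = s(u, v) ∧ ∃ p : G.Walk u v, p.IsHamiltonian}

lemma key {V : Type*} [Fintype V] [DecidableEq V] (G : SimpleGraph V)
    (hcard : 3 < Fintype.card V) (hnonham : ¬ G.IsHamiltonian)
    {u v : V} (p : G.Walk u v) (hp : p.IsHamiltonian) : ¬ G.Adj u v := by
  intro h
  have hne : s(v, u) ∉ p.edges := by
    intro he
    cases p with
    | nil => simp at he
    | cons h' q =>
      rw [Walk.edges_cons, List.mem_cons] at he
      have hpath := hp.isPath
      rcases he with he | he
      · rw [Sym2.eq_iff] at he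
        rcases he with ⟨rfl, rfl⟩ | ⟨rfl, -⟩
        · exact G.irrefl h
        · -- q : Walk w v with w = v
          have hq : q.IsPath := hpath.of_cons
          rw [Walk.isPath_iff_eq_nil] at hq
          subst hq
          have := hp.length_eq
          simp at this
          omega
      · have hu : u ∈ q.support := by
          rw [Sym2.eq_swap] at he
          exact q.fst_mem_support_of_mem_edges he
        rw [Walk.cons_isPath_iff] at hpath
        exact hpath.2 hu
  have hcyc : (Walk.cons h.symm p).IsHamiltonianCycle := by
    rw [Walk.isHamiltonianCycle_iff_isCycle_and_support_count_tail_eq_one]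
    constructor
    · rw [Walk.cons_isCycle_iff]
      exact ⟨hp.isPath, hne⟩
    · intro a
      rw [Walk.support_cons, List.tail_cons]
      exact hp a
  exact hnonham (fun _ => ⟨v, _, hcyc⟩)

lemma arith (n : ℕ) (hn : 4 ≤ n) :
    n.choose 2 - (n - 1) ≤ (n - 1) * (n - 2) / 2 := by
  obtain ⟨a, rfl⟩ : ∃ a, n = a + 4 := ⟨n - 4, by omega⟩
  have e1 : a + 4 - 1 = a + 3 := by omega
  have e2 : a + 4 - 2 = a + 2 := by omega
  rw [Nat.choose_two_right, e1, e2]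
  have h4 : (a + 4) * (a + 3) = (a + 3) * (a + 2) + (a + 3) * 2 := by ring
  rw [h4, Nat.add_mul_div_right _ _ (by norm_num : 0 < 2)]
  omega

theorem stmt_3 {V : Type*} [Fintype V] [DecidableEq V] (G : SimpleGraph V)
    (hcard : 3 < Fintype.card V) (hnonham : ¬ G.IsHamiltonian)
    (hpath : ∃ (a b : V) (p : G.Walk a b), p.IsHamiltonian) :
    (hamPairs G).ncard ≤ (Fintype.card V - 1) * (Fintype.card V - 2) / 2 := by
  classical
  have hsub : hamPairs G ⊆ Gᶜ.edgeSet := by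
    rintro e ⟨u, v, huv, rfl, p, hp⟩
    rw [SimpleGraph.mem_edgeSet, SimpleGraph.compl_adj]
    exact ⟨huv, key G hcard hnonham p hp⟩
  have h1 : (hamPairs G).ncard ≤ Gᶜ.edgeFinset.card := by
    rw [← Set.ncard_coe_finset, SimpleGraph.coe_edgeFinset]
    exact Set.ncard_le_ncard hsub (Set.toFinite _)
  have h2 : Fintype.card V - 1 ≤ G.edgeFinset.card := by
    obtain ⟨a, b, p, hp⟩ := hpath
    have hsub2 : p.edges.toFinset ⊆ G.edgeFinset := by
      intro e he
      rw [List.mem_toFinset] at he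
      rw [SimpleGraph.mem_edgeFinset]
      exact p.edges_subset_edgeSet he
    calc Fintype.card V - 1 = p.length := hp.length_eq.symm
      _ = p.edges.toFinset.card := by
          rw [List.toFinset_card_of_nodup hp.isPath.isTrail.edges_nodup, Walk.length_edges]
      _ ≤ G.edgeFinset.card := Finset.card_le_card hsub2
  have h3 : Gᶜ.edgeFinset.card + G.edgeFinset.card ≤ (Fintype.card V).choose 2 := by
    rw [← SimpleGraph.card_edgeFinset_top_eq_card_choose_two,
      ← Finset.card_union_of_disjoint (SimpleGraph.disjoint_edgeFinset.mpr disjoint_compl_left)]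
    exact Finset.card_le_card (Finset.union_subset
      (SimpleGraph.edgeFinset_mono le_top) (SimpleGraph.edgeFinset_mono le_top))
  have harith := arith (Fintype.card V) (by omega)
  omega
end

section
/- For n > 3, the pair-connected ratio of any non-hamiltonian graph of order n is at most (n-2)/n; that is, if G is non-hamiltonian and k pairs of vertices of G are joined by hamiltonian paths, then k / C(n,2) ≤ (n-2)/n. -/
/-!
A hamiltonian path whose endpoints are adjacent closes up into a hamiltonian cycle, so in a
non-hamiltonian graph the pairs joined by hamiltonian paths are non-edges. If there is such a
pair at all, the hamiltonian path itself supplies at least `n - 1` edges, leaving at most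
`C(n,2) - (n - 1) = (n - 1)(n - 2)/2` non-edges, and `((n - 1)(n - 2)/2) / C(n,2) = (n - 2)/n`.
-/

namespace SimpleGraph

variable {V : Type*} [DecidableEq V] {G : SimpleGraph V}

lemma hamPairs_subset_edgeSet_top : hamPairs G ⊆ (⊤ : SimpleGraph V).edgeSet := by
  rintro _ ⟨u, v, huv, rfl, -⟩
  exact huv

variable [Fintype V]

lemma Walk.IsHamiltonian.isHamiltonianCycle_cons {u v : V} {p : G.Walk u v}
    (hp : p.IsHamiltonian) (h : G.Adj v u) (hcard : 3 ≤ Fintype.card V) :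
    (Walk.cons h p).IsHamiltonianCycle := by
  rw [Walk.isHamiltonianCycle_iff_isCycle_and_length_eq,
    Walk.isCycle_iff_isPath_tail_and_le_length]
  simp only [Walk.getVert_cons_succ, Walk.tail_cons, Walk.isPath_copy, Walk.length_cons,
    hp.length_eq]
  exact ⟨⟨hp.isPath, by omega⟩, by omega⟩

lemma Walk.IsHamiltonian.card_sub_one_le_ncard_edgeSet {u v : V} {p : G.Walk u v}
    (hp : p.IsHamiltonian) : Fintype.card V - 1 ≤ G.edgeSet.ncard := by
  classical
  rw [Set.ncard_eq_toFinset_card', ← hp.length_eq]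
  exact hp.isPath.isTrail.length_le_card_edgeFinset

lemma isHamiltonian_of_isHamiltonian_walk_of_adj {u v : V} {p : G.Walk u v}
    (hp : p.IsHamiltonian) (h : G.Adj v u) (hcard : 3 ≤ Fintype.card V) : G.IsHamiltonian :=
  fun _ ↦ ⟨v, _, hp.isHamiltonianCycle_cons h hcard⟩

lemma disjoint_hamPairs_edgeSet (hcard : 3 ≤ Fintype.card V) (hG : ¬ G.IsHamiltonian) :
    Disjoint (hamPairs G) G.edgeSet := by
  rw [Set.disjoint_left]
  rintro _ ⟨u, v, -, rfl, p, hp⟩ hadj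
  exact hG (isHamiltonian_of_isHamiltonian_walk_of_adj hp (G.adj_symm hadj) hcard)

lemma ncard_hamPairs_add_ncard_edgeSet_le (hcard : 3 ≤ Fintype.card V)
    (hG : ¬ G.IsHamiltonian) :
    (hamPairs G).ncard + G.edgeSet.ncard ≤ (Fintype.card V).choose 2 := by
  classical
  have htop : (⊤ : SimpleGraph V).edgeSet.ncard = (Fintype.card V).choose 2 := by
    rw [Set.ncard_eq_toFinset_card']
    exact card_edgeFinset_top_eq_card_choose_two
  rw [← Set.ncard_union_eq (disjoint_hamPairs_edgeSet hcard hG), ← htop]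
  exact Set.ncard_le_ncard (Set.union_subset hamPairs_subset_edgeSet_top
    (edgeSet_mono le_top))

lemma ncard_hamPairs_add_card_sub_one_le (hcard : 3 ≤ Fintype.card V)
    (hG : ¬ G.IsHamiltonian) :
    (hamPairs G).ncard + (Fintype.card V - 1) ≤ (Fintype.card V).choose 2 := by
  rcases (hamPairs G).eq_empty_or_nonempty with hempty | ⟨_, u, v, -, -, p, hp⟩
  · rw [hempty, Set.ncard_empty, zero_add, Nat.choose_two_right, Nat.le_div_iff_mul_le two_pos,
      mul_comm]
    exact Nat.mul_le_mul_right _ (by omega)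
  · have := ncard_hamPairs_add_ncard_edgeSet_le hcard hG
    have := hp.card_sub_one_le_ncard_edgeSet
    omega

end SimpleGraph

lemma div_choose_two_le_of_add_le {n k : ℕ} (hn : 2 ≤ n) (hk : k + (n - 1) ≤ n.choose 2) :
    (k : ℚ) / n.choose 2 ≤ ((n : ℚ) - 2) / n := by
  have hk' : (k : ℚ) + ((n : ℚ) - 1) ≤ n * ((n : ℚ) - 1) / 2 := by
    rw [← Nat.cast_choose_two, ← Nat.cast_pred (by omega)]
    exact_mod_cast hk
  have hn' : (2 : ℚ) ≤ n := by exact_mod_cast hn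
  have hchoose : (0 : ℚ) < n.choose 2 := by
    rw [Nat.cast_choose_two]
    nlinarith
  rw [div_le_div_iff₀ hchoose (by linarith), Nat.cast_choose_two]
  nlinarith

theorem stmt_5 {V : Type*} [Fintype V] [DecidableEq V] (G : SimpleGraph V)
    (hcard : 3 < Fintype.card V) (hnonham : ¬ G.IsHamiltonian)
    (k : ℕ) (hk : k = (hamPairs G).ncard) :
    (k : ℚ) / ((Fintype.card V).choose 2) ≤ ((Fintype.card V : ℚ) - 2) / (Fintype.card V) := by
  subst hk
  exact div_choose_two_le_of_add_le (by omega)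
    (SimpleGraph.ncard_hamPairs_add_card_sub_one_le hcard.le hnonham)
end

section
/- Let G be a non-hamiltonian graph of order m with an H-path connected edge set S of size n ≥ 2. For each edge e_i = (v_i, w_i) of S, attach a complete graph K^i on k vertices so that every vertex of K^i is adjacent to both v_i and w_i (and to all other vertices of K^i), obtaining a graph G_k. Then G_k is not hamiltonian. -/
/-!
In a hamiltonian cycle of `G_k` every maximal run of new vertices lies inside a single clique
`K^i`, whose only old neighbours are `v_i` and `w_i`; so the run is flanked by `v_i` and `w_i`,
and shortcutting it by the edge `v_i w_i` of `G` leaves a hamiltonian cycle of `G`. Two distinct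
edges of `S` give `G` at least three vertices, so this really is a cycle.
-/

/-- A set `S` of edges of `G` is H-path connected if for every two distinct edges
`e ≠ f` of `S` there is a hamiltonian path of `G` with one endpoint in `e`, the other
endpoint in `f`, containing every edge of `S \ {e, f}`. -/
def HPathConnected {V : Type*} [DecidableEq V] (G : SimpleGraph V) (S : Finset (Sym2 V)) :
    Prop :=
  ↑S ⊆ G.edgeSet ∧ ∀ e ∈ S, ∀ f ∈ S, e ≠ f →
    ∃ (u v : V) (p : G.Walk u v), p.IsHamiltonian ∧ u ∈ e ∧ v ∈ f ∧
      ∀ g ∈ S, g ≠ e → g ≠ f → g ∈ p.edges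

/-- The graph `G_k` obtained from `G` by attaching, to each edge `e i = (v i, w i)`,
a complete graph on `k` new vertices each of which is also adjacent to `v i` and `w i`. -/
def attachCliques {V : Type*} (G : SimpleGraph V) (n k : ℕ) (v w : Fin n → V) :
    SimpleGraph (V ⊕ (Fin n × Fin k)) :=
  SimpleGraph.fromRel (fun p q =>
    match p, q with
    | Sum.inl a, Sum.inl b => G.Adj a b
    | Sum.inl a, Sum.inr (i, _) => a = v i ∨ a = w i
    | Sum.inr (i, _), Sum.inr (j, _) => i = j
    | Sum.inr _, Sum.inl _ => False)


namespace SimpleGraph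

variable {α : Type*} {G : SimpleGraph α}

theorem three_le_card_of_mem_edgeSet [Fintype α] {e f : Sym2 α} (he : e ∈ G.edgeSet)
    (hf : f ∈ G.edgeSet) (hef : e ≠ f) : 3 ≤ Fintype.card α := by
  classical
  have htwo : 1 < G.edgeFinset.card :=
    Finset.one_lt_card.2 ⟨e, by simpa using he, f, by simpa using hf, hef⟩
  have := G.card_edgeFinset_le_card_choose_two
  by_contra! hlt
  have : (Fintype.card α).choose 2 ≤ 1 := by
    interval_cases Fintype.card α <;> decide
  omega

theorem Walk.IsHamiltonian.isHamiltonianCycle_cons_s9 [DecidableEq α] [Fintype α] {u v : α}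
    {r : G.Walk u v} (hr : r.IsHamiltonian) (h : G.Adj v u) (hcard : 3 ≤ Fintype.card α) :
    (Walk.cons h r).IsHamiltonianCycle := by
  rw [Walk.isHamiltonianCycle_iff_isCycle_and_support_count_tail_eq_one, Walk.cons_isCycle_iff,
    Walk.support_cons, List.tail_cons]
  refine ⟨⟨hr.isPath, fun he => ?_⟩, hr⟩
  have := hr.isPath.length_eq_one_of_mem_edges (Sym2.eq_swap ▸ he)
  have := hr.length_eq
  omega

theorem Walk.IsHamiltonian.of_support_eq_filterMap_getLeft [DecidableEq α] {β : Type*}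
    [DecidableEq β] {H : SimpleGraph (α ⊕ β)} {s t : α ⊕ β} {q : H.Walk s t} {x y : α}
    {r : G.Walk x y}
    (hq : q.IsHamiltonian) (hr : r.support = q.support.filterMap Sum.getLeft?) :
    r.IsHamiltonian := by
  refine Walk.IsPath.isHamiltonian_of_mem (Walk.IsPath.mk' ?_) fun b => ?_
  · rw [hr]
    refine hq.isPath.support_nodup.filterMap fun _ _ _ h h' => ?_
    exact (Sum.getLeft?_eq_some_iff.1 h).trans (Sum.getLeft?_eq_some_iff.1 h').symm
  · rw [hr]
    exact List.mem_filterMap.2 ⟨.inl b, hq.mem_support _, rfl⟩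

end SimpleGraph

open SimpleGraph Sum

/-- `H` arises from `G` by adding new vertices `W`, each new vertex `y` being attached to the
clique `N y` of `G`: its old neighbours lie in `N y`, and adjacent new vertices share it. -/
structure IsCliqueAttachment {V W : Type*} (H : SimpleGraph (V ⊕ W)) (G : SimpleGraph V)
    (N : W → Set V) : Prop where
  adj_inl_inl {a b : V} : H.Adj (inl a) (inl b) → G.Adj a b
  mem_of_adj_inl_inr {a : V} {y : W} : H.Adj (inl a) (inr y) → a ∈ N y
  eq_of_adj_inr_inr {y y' : W} : H.Adj (inr y) (inr y') → N y = N y'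
  isClique (y : W) : G.IsClique (N y)

namespace IsCliqueAttachment

variable {V W : Type*} {H : SimpleGraph (V ⊕ W)} {G : SimpleGraph V} {N : W → Set V}

/-- The old vertices that may follow a vertex of `H` once the new vertices are suppressed. -/
def anchor (N : W → Set V) : V ⊕ W → Set V :=
  Sum.elim (fun a => {a}) N

theorem adj_of_adj_inl (hA : IsCliqueAttachment H G N) {a x : V} {s : V ⊕ W}
    (h : H.Adj (inl a) s) (hx : x ∈ anchor N s) (hne : a ≠ x) : G.Adj a x := by
  cases s with
  | inl b =>
    obtain rfl : x = b := hx
    exact hA.adj_inl_inl h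
  | inr y => exact hA.isClique y (hA.mem_of_adj_inl_inr h) hx hne

theorem anchor_subset_of_adj_inr (hA : IsCliqueAttachment H G N) {y : W} {s : V ⊕ W}
    (h : H.Adj (inr y) s) : anchor N s ⊆ N y := by
  cases s with
  | inl b =>
    rintro x rfl
    exact hA.mem_of_adj_inl_inr h.symm
  | inr y' => exact (hA.eq_of_adj_inr_inr h).symm.subset

theorem exists_walk_support_eq_filterMap (hA : IsCliqueAttachment H G N) {s : V ⊕ W} {t : V}
    (q : H.Walk s (inl t)) (hq : q.support.Nodup) :
    ∃ (x : V) (r : G.Walk x t), x ∈ anchor N s ∧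
      r.support = q.support.filterMap getLeft? := by
  generalize ht : (inl t : V ⊕ W) = t' at q
  induction q with
  | nil =>
    subst ht
    exact ⟨t, Walk.nil, rfl, rfl⟩
  | @cons s s' t' h q ih =>
    rw [Walk.support_cons, List.nodup_cons] at hq
    obtain ⟨x, r, hx, hr⟩ := ih ht hq.2
    cases s with
    | inr y =>
      exact ⟨x, r, hA.anchor_subset_of_adj_inr h hx, hr⟩
    | inl a =>
      have hxq : inl x ∈ q.support := by
        simpa [hr, List.mem_filterMap, getLeft?_eq_some_iff] using r.start_mem_support
      have hne : a ≠ x := by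
        rintro rfl
        exact hq.1 hxq
      exact ⟨a, Walk.cons (hA.adj_of_adj_inl h hx hne) r, rfl, congrArg (List.cons a) hr⟩

theorem isHamiltonian [Fintype V] [DecidableEq V] [Fintype W] [DecidableEq W]
    (hA : IsCliqueAttachment H G N) (hcard : 3 ≤ Fintype.card V) (hH : H.IsHamiltonian) :
    G.IsHamiltonian := by
  intro _
  obtain ⟨a⟩ : Nonempty V := Fintype.card_pos_iff.1 (by omega)
  have : Nontrivial V := Fintype.one_lt_card_iff_nontrivial.1 (by omega)
  have : Nontrivial (V ⊕ W) := inl_injective.nontrivial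
  obtain ⟨p, hp⟩ := hH.exists_isHamiltonianCycle (inl a)
  cases p with
  | nil => exact absurd hp.isCycle Walk.not_isCycle_nil
  | cons h q =>
    have hq : q.IsHamiltonian :=
      (Walk.isHamiltonianCycle_iff_isCycle_and_support_count_tail_eq_one.1 hp).2
    obtain ⟨x, r, hx, hr⟩ := hA.exists_walk_support_eq_filterMap q hq.isPath.support_nodup
    have hr' : r.IsHamiltonian := hq.of_support_eq_filterMap_getLeft hr
    have hne : a ≠ x := by
      rintro rfl
      have := hr'.length_eq
      rw [Walk.length_eq_zero_iff.2 (Walk.isPath_iff_nil.1 hr'.isPath)] at this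
      omega
    exact ⟨a, _, hr'.isHamiltonianCycle_cons_s9 (hA.adj_of_adj_inl h hx hne) hcard⟩

end IsCliqueAttachment

theorem isCliqueAttachment_attachCliques {V : Type*} {G : SimpleGraph V} {n k : ℕ}
    {v w : Fin n → V} (hadj : ∀ i, G.Adj (v i) (w i)) :
    IsCliqueAttachment (attachCliques G n k v w) G fun y => {v y.1, w y.1} where
  adj_inl_inl h := by
    obtain ⟨-, h | h⟩ := (fromRel_adj _ _ _).1 h
    exacts [h, h.symm]
  mem_of_adj_inl_inr h := by
    obtain ⟨-, h | h⟩ := (fromRel_adj _ _ _).1 h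
    exacts [h, h.elim]
  eq_of_adj_inr_inr h := by
    obtain ⟨-, h | h⟩ := (fromRel_adj _ _ _).1 h <;> simp only [h]
  isClique y := isClique_pair.2 fun _ => hadj y.1

theorem stmt_9_general {V : Type*} [Fintype V] [DecidableEq V] (G : SimpleGraph V)
    (hnonham : ¬ G.IsHamiltonian) (n k : ℕ) (hn : 2 ≤ n)
    (v w : Fin n → V) (hadj : ∀ i, G.Adj (v i) (w i))
    (hinj : Function.Injective fun i => s(v i, w i)) :
    ¬ (attachCliques G n k v w).IsHamiltonian := by
  have hcard : 3 ≤ Fintype.card V :=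
    G.three_le_card_of_mem_edgeSet (hadj ⟨0, by omega⟩) (hadj ⟨1, by omega⟩)
      (hinj.ne (by simp [Fin.ext_iff]))
  exact fun hH => hnonham ((isCliqueAttachment_attachCliques hadj).isHamiltonian hcard hH)

theorem stmt_9 {V : Type*} [Fintype V] [DecidableEq V] (G : SimpleGraph V)
    (hnonham : ¬ G.IsHamiltonian) (n k : ℕ) (hn : 2 ≤ n) (hk : 1 ≤ k)
    (v w : Fin n → V) (hadj : ∀ i, G.Adj (v i) (w i))
    (hinj : Function.Injective fun i => s(v i, w i))
    (hS : HPathConnected G (Finset.univ.image fun i => s(v i, w i))) :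
    ¬ (attachCliques G n k v w).IsHamiltonian :=
  stmt_9_general G hnonham n k hn v w hadj hinj
end
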